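/- arXiv:2602.11248 — 4 statements merged into one kernel-verified Lean document; each statement's English description precedes it below -/
import Mathlib

section
/- Monotonicity propagates to the value function: if f̃(X_i, b) ≤ f̃(X_i, b') whenever 0 ≤ b ≤ b', and all fouling increments B_k are nonnegative, then the subproblem value is monotone in the last-clean index: Φ[i, j'] ≤ Φ[i, j] for all j ≤ j' < i, i.e., having cleaned more recently never increases the optimal future cost. -/
/-- Total cost of operating voyages `i, i+1, …` for `m` remaining voyages under
schedule `z`, starting with pre-voyage fouling level `b`.  If the ship is
cleaned before a voyage (`z i = true`) the fouling resets to `0` and the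
cleaning cost `c i` is paid; after each voyage the fouling increases by `B i`. -/
noncomputable def cost (f : ℕ → ℝ → ℝ) (c B : ℕ → ℝ) :
    ℕ → ℕ → ℝ → (ℕ → Bool) → ℝ
  | 0, _, _, _ => 0
  | m + 1, i, b, z =>
      if z i then f i 0 + c i + cost f c B m (i + 1) (B i) z
      else f i b + cost f c B m (i + 1) (b + B i) z

/-- `Phi f c B n i j` is the optimal value of SUB-PROBLEM[i,j]: the minimal total
cost over all cleaning schedules for voyages `i, …, n`, given that the last
cleaning occurred before voyage `j`, so the starting fouling is
`∑_{k=j}^{i-1} B k`. -/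
noncomputable def Phi (f : ℕ → ℝ → ℝ) (c B : ℕ → ℝ) (n i j : ℕ) : ℝ :=
  ⨅ z : ℕ → Bool, cost f c B (n + 1 - i) i (∑ k ∈ Finset.Ico j i, B k) z

lemma cost_mono (f : ℕ → ℝ → ℝ) (c B : ℕ → ℝ)
    (hB : ∀ k, 0 ≤ B k)
    (hf : ∀ i b b', 0 ≤ b → b ≤ b' → f i b ≤ f i b') :
    ∀ m i b b' (z : ℕ → Bool), 0 ≤ b → b ≤ b' →
      cost f c B m i b z ≤ cost f c B m i b' z := by
  intro m
  induction m with
  | zero => intro i b b' z _ _; simp [cost]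
  | succ m ih =>
    intro i b b' z hb hbb'
    by_cases h : z i
    · simp [cost, h]
    · simp only [cost, h, if_neg, Bool.false_eq_true, if_false]
      exact add_le_add (hf i b b' hb hbb')
        (ih (i+1) (b + B i) (b' + B i) z (add_nonneg hb (hB i))
          (by linarith))

lemma range_cost_finite (f : ℕ → ℝ → ℝ) (c B : ℕ → ℝ) :
    ∀ m i b, (Set.range (fun z : ℕ → Bool => cost f c B m i b z)).Finite := by
  intro m
  induction m with
  | zero => intro i b; exact (Set.finite_singleton 0).subset (by rintro x ⟨z, rfl⟩; rfl)
  | succ m ih =>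
    intro i b
    apply Set.Finite.subset
      (((ih (i+1) (B i)).image (fun x => f i 0 + c i + x)).union
        ((ih (i+1) (b + B i)).image (fun x => f i b + x)))
    rintro x ⟨z, rfl⟩
    by_cases h : z i
    · left; exact ⟨cost f c B m (i+1) (B i) z, ⟨z, rfl⟩, by simp [cost, h]⟩
    · right; exact ⟨cost f c B m (i+1) (b + B i) z, ⟨z, rfl⟩, by simp [cost, h]⟩

/-- Monotonicity of the value function in the last-clean index: if the fuel
function `f̃` is monotone nondecreasing in the fouling level (for nonnegative
fouling) and all fouling increments are nonnegative, then having cleaned more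
recently never increases the optimal future cost:
`Φ[i, j'] ≤ Φ[i, j]` for `j ≤ j' < i`. -/
theorem Phi_mono_lastClean (f : ℕ → ℝ → ℝ) (c B : ℕ → ℝ) (n : ℕ)
    (hB : ∀ k, 0 ≤ B k)
    (hf : ∀ i b b', 0 ≤ b → b ≤ b' → f i b ≤ f i b')
    (i j j' : ℕ) (hjj' : j ≤ j') (hj'i : j' < i) :
    Phi f c B n i j' ≤ Phi f c B n i j := by
  have hnn : 0 ≤ ∑ k ∈ Finset.Ico j' i, B k :=
    Finset.sum_nonneg fun k _ => hB k
  have hsum : ∑ k ∈ Finset.Ico j' i, B k ≤ ∑ k ∈ Finset.Ico j i, B k :=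
    Finset.sum_le_sum_of_subset_of_nonneg
      (Finset.Ico_subset_Ico hjj' le_rfl) (fun k _ _ => hB k)
  apply ciInf_mono
  · exact (range_cost_finite f c B _ i _).bddBelow
  · intro z
    exact cost_mono f c B hB hf _ i _ _ z hnn hsum
end

section
/- The Shapley value formula ∑_{S ⊆ N \ {l}} (|S|!·(M−|S|−1)!/M!)·[v(S ∪ {l}) − v(S)] satisfies the efficiency axiom: the sum over all players l of their Shapley values equals v(N) − v(∅), where N is the full player set of size M. -/
/-!
Every pair `(l, S)` with `l ∉ S` contributes `+w(|S|) v(S ∪ {l})` and `-w(|S|) v(S)`, where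
`w(k) = k! (M - k - 1)! / M!`. Collecting by coalition, `v(T)` receives the coefficient
`|T| w(|T| - 1) - (M - |T|) w(|T|)`. Both products equal `|T|! (M - |T|)! / M!` whenever they
are not multiplied by zero, so the coefficient vanishes except for `T = N` (where it is `1`) and
`T = ∅` (where it is `-1`).
-/

/-- The Shapley value of player `l` for the characteristic function
`v : Finset N → ℝ`:
`φ_l = ∑_{S ⊆ N \ {l}} (|S|! (M − |S| − 1)! / M!) · (v(S ∪ {l}) − v(S))`,
where `M` is the total number of players. -/
noncomputable def shapley {N : Type*} [Fintype N] [DecidableEq N]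
    (v : Finset N → ℝ) (l : N) : ℝ :=
  ∑ S ∈ ((Finset.univ : Finset N).erase l).powerset,
    ((S.card.factorial * (Fintype.card N - S.card - 1).factorial : ℕ) : ℝ) /
        ((Fintype.card N).factorial : ℕ) * (v (insert l S) - v S)

open Finset
open scoped Nat

namespace Finset

variable {α β : Type*} [DecidableEq α] [AddCommMonoid β]

theorem sum_sum_powerset_erase_eq_sum_sum_sdiff (U : Finset α) (f : α → Finset α → β) :
    ∑ l ∈ U, ∑ S ∈ (U.erase l).powerset, f l S = ∑ S ∈ U.powerset, ∑ l ∈ U \ S, f l S :=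
  sum_comm' fun l S => by simp only [mem_powerset, subset_erase, mem_sdiff]; tauto

theorem sum_sum_powerset_erase_eq_sum_sum_erase (U : Finset α) (f : α → Finset α → β) :
    ∑ l ∈ U, ∑ S ∈ (U.erase l).powerset, f l S =
      ∑ T ∈ U.powerset, ∑ l ∈ T, f l (T.erase l) := by
  calc ∑ l ∈ U, ∑ S ∈ (U.erase l).powerset, f l S
      = ∑ l ∈ U, ∑ T ∈ U.powerset with l ∈ T, f l (T.erase l) := by
        refine sum_congr rfl fun l hl => ?_
        refine sum_nbij' (insert l) (erase · l) ?_ ?_ ?_ ?_ ?_ <;> intro S hS <;>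
          simp only [mem_powerset, subset_erase, mem_filter] at hS ⊢
        · exact ⟨insert_subset hl hS.1, mem_insert_self l S⟩
        · exact ⟨(erase_subset l S).trans hS.1, notMem_erase l S⟩
        · exact erase_insert hS.2
        · exact insert_erase hS.2
        · rw [erase_insert hS.2]
    _ = ∑ T ∈ U.powerset, ∑ l ∈ T, f l (T.erase l) :=
        sum_comm' fun l T => by simp only [mem_filter, mem_powerset]; grind

end Finset

noncomputable def shapleyWeight (M k : ℕ) : ℝ := ((k ! * (M - k - 1)! : ℕ) : ℝ) / (M ! : ℕ)

theorem shapley_eq_sum_shapleyWeight {N : Type*} [Fintype N] [DecidableEq N]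
    (v : Finset N → ℝ) (l : N) :
    shapley v l = ∑ S ∈ (univ.erase l).powerset,
      shapleyWeight (Fintype.card N) S.card * (v (insert l S) - v S) :=
  rfl

variable {M k : ℕ}

theorem mul_shapleyWeight_pred (hk : 0 < k) (hkM : k ≤ M) :
    k * shapleyWeight M (k - 1) = ((k ! * (M - k)! : ℕ) : ℝ) / (M ! : ℕ) := by
  rw [shapleyWeight, show M - (k - 1) - 1 = M - k by omega, mul_div_assoc', ← Nat.cast_mul,
    ← mul_assoc, Nat.mul_factorial_pred hk.ne']

theorem sub_mul_shapleyWeight (hkM : k < M) :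
    ((M - k : ℕ) : ℝ) * shapleyWeight M k = ((k ! * (M - k)! : ℕ) : ℝ) / (M ! : ℕ) := by
  rw [shapleyWeight, mul_div_assoc', ← Nat.cast_mul, mul_left_comm,
    Nat.mul_factorial_pred (by omega)]

theorem mul_shapleyWeight_pred_sub_mul_shapleyWeight (hkM : k ≤ M) :
    k * shapleyWeight M (k - 1) - ((M - k : ℕ) : ℝ) * shapleyWeight M k =
      (if k = M then 1 else 0) - (if k = 0 then 1 else 0) := by
  have hM : (M ! : ℝ) ≠ 0 := by positivity
  rcases Nat.eq_zero_or_pos k with rfl | hk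
  · rcases Nat.eq_zero_or_pos M with rfl | hM0
    · simp
    · rw [sub_mul_shapleyWeight hM0]
      simp [hM0.ne, hM]
  · rcases hkM.eq_or_lt with rfl | hkM
    · rw [mul_shapleyWeight_pred hk le_rfl]
      simp [hk.ne', hM]
    · rw [mul_shapleyWeight_pred hk hkM.le, sub_mul_shapleyWeight hkM]
      simp [hk.ne', hkM.ne]

/-- Efficiency axiom: the Shapley values of all players sum to
`v(N) − v(∅)`. -/
theorem shapley_efficiency {N : Type*} [Fintype N] [DecidableEq N]
    (v : Finset N → ℝ) :
    ∑ l : N, shapley v l = v Finset.univ - v ∅ := by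
  calc ∑ l, shapley v l
      = ∑ l, ∑ S ∈ (univ.erase l).powerset, shapleyWeight (Fintype.card N) S.card * v (insert l S)
        - ∑ l, ∑ S ∈ (univ.erase l).powerset, shapleyWeight (Fintype.card N) S.card * v S := by
        simp only [shapley_eq_sum_shapleyWeight, mul_sub, sum_sub_distrib]
    _ = ∑ T ∈ univ.powerset, (T.card * shapleyWeight (Fintype.card N) (T.card - 1)
          - ((Fintype.card N - T.card : ℕ) : ℝ) *
            shapleyWeight (Fintype.card N) T.card) * v T := by
        rw [sum_sum_powerset_erase_eq_sum_sum_erase, sum_sum_powerset_erase_eq_sum_sum_sdiff,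
          ← sum_sub_distrib]
        refine sum_congr rfl fun T _ => ?_
        rw [sum_congr rfl fun l hl => by rw [card_erase_of_mem hl, insert_erase hl],
          sum_const, sum_const, card_univ_sdiff]
        simp only [nsmul_eq_mul]
        ring
    _ = ∑ T ∈ univ.powerset, ((if T = univ then 1 else 0) - if T = ∅ then 1 else 0) * v T := by
        refine sum_congr rfl fun T _ => ?_
        simp only [mul_shapleyWeight_pred_sub_mul_shapleyWeight (card_le_univ T),
          card_eq_iff_eq_univ, card_eq_zero]
    _ = v univ - v ∅ := by simp [sub_mul, sum_sub_distrib]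
end

section
/- In the affine fuel model with uniform parameters (α_j = α, B_k = B > 0 for all k, c_j = c > 0), cleaning before voyage j resets the fouling, and the optimal schedule cleans periodically: cleaning every m voyages over n = q·m voyages yields total cost n·α + q·c − c + β·B·q·m(m−1)/2, which as a function of the period m is minimized near m ≈ √(2c/(β·B)). In particular, for a single potential cleaning placed at voyage t in an n-voyage horizon, the fuel saved is β·B·(n − t + 1)·(t − 1), so placing one cleaning is beneficial iff max_t β·B·(n−t+1)(t−1) > c. -/
noncomputable def F (α β B : ℝ) (m : ℕ) (b : ℝ) : ℝ :=
  m * (α + β * b) + β * B * (m * (m - 1)) / 2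

lemma cost_false (α β B c : ℝ) :
    ∀ (m i : ℕ) (b : ℝ) (z : ℕ → Bool), (∀ j, i ≤ j → z j = false) →
      cost (fun _ b => α + β * b) (fun _ => c) (fun _ => B) m i b z = F α β B m b := by
  intro m
  induction m with
  | zero => intro i b z h; simp [cost, F]
  | succ m ih =>
    intro i b z h
    rw [cost, h i le_rfl]
    simp only [Bool.false_eq_true, if_false]
    rw [ih (i+1) (b+B) z (fun j hj => h j (by omega))]
    simp only [F]
    push_cast
    ring

lemma cost_single (α β B c : ℝ) (t : ℕ) :
    ∀ (d m₂ i : ℕ) (b : ℝ), t = i + d →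
      cost (fun _ b => α + β * b) (fun _ => c) (fun _ => B) (d + 1 + m₂) i b
        (fun j => decide (j = t)) =
      F α β B d b + (α + c) + F α β B m₂ B := by
  intro d
  induction d with
  | zero =>
    intro m₂ i b ht
    subst ht
    rw [show 0 + 1 + m₂ = m₂ + 1 from by omega, cost]
    simp only [decide_eq_true_eq]
    rw [if_pos trivial]
    rw [cost_false α β B c m₂ _ B _ (fun j hj => by simp; omega)]
    simp [F]
  | succ d ih =>
    intro m₂ i b ht
    rw [show d + 1 + 1 + m₂ = (d + 1 + m₂) + 1 from by omega, cost]
    rw [if_neg (by simp; omega)]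
    rw [ih m₂ (i+1) (b+B) (by omega)]
    simp only [F]
    push_cast
    ring

/-- Uniform affine model (`f̃(X_j,b) = α + β·b`, constant increment `B > 0` per
voyage, zero initial fouling, constant cleaning cost `c > 0`): placing a single
cleaning before voyage `t` saves `β·B·(n−t+1)·(t−1)` in fuel at cost `c`, so the
total-cost improvement is `β·B·(n−t+1)·(t−1) − c`; and a single cleaning at some
voyage `t ∈ {1,…,n}` strictly lowers the total cost iff
`β·B·(n−t+1)·(t−1) > c` for some such `t`. -/
theorem single_cleaning_savings (n : ℕ) (α β B c : ℝ)
    (hβ : 0 < β) (hB : 0 < B) (hc : 0 < c) :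
    (∀ t : ℕ, 1 ≤ t → t ≤ n →
      cost (fun _ b => α + β * b) (fun _ => c) (fun _ => B) n 1 0 (fun _ => false) -
        cost (fun _ b => α + β * b) (fun _ => c) (fun _ => B) n 1 0
          (fun i => decide (i = t)) =
      β * B * ((n : ℝ) - t + 1) * ((t : ℝ) - 1) - c) ∧
    ((∃ t ∈ Finset.Icc 1 n,
        cost (fun _ b => α + β * b) (fun _ => c) (fun _ => B) n 1 0
            (fun i => decide (i = t)) <
          cost (fun _ b => α + β * b) (fun _ => c) (fun _ => B) n 1 0
            (fun _ => false)) ↔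
      ∃ t ∈ Finset.Icc 1 n, c < β * B * ((n : ℝ) - t + 1) * ((t : ℝ) - 1)) := by
  have key : ∀ t : ℕ, 1 ≤ t → t ≤ n →
      cost (fun _ b => α + β * b) (fun _ => c) (fun _ => B) n 1 0 (fun _ => false) -
        cost (fun _ b => α + β * b) (fun _ => c) (fun _ => B) n 1 0
          (fun i => decide (i = t)) =
      β * B * ((n : ℝ) - t + 1) * ((t : ℝ) - 1) - c := by
    intro t ht1 ht2
    rw [cost_false α β B c n 1 0 _ (fun _ _ => rfl)]
    rw [show n = (t - 1) + 1 + (n - t) from by omega,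
      cost_single α β B c t (t-1) (n-t) 1 0 (by omega)]
    simp only [F]
    push_cast [Nat.cast_sub ht1, Nat.cast_sub ht2]
    ring
  refine ⟨key, ?_⟩
  constructor
  · rintro ⟨t, ht, h⟩
    simp only [Finset.mem_Icc] at ht
    refine ⟨t, by simp [Finset.mem_Icc]; omega, ?_⟩
    have := key t ht.1 ht.2
    linarith
  · rintro ⟨t, ht, h⟩
    simp only [Finset.mem_Icc] at ht
    refine ⟨t, by simp [Finset.mem_Icc]; omega, ?_⟩
    have := key t ht.1 ht.2
    linarith
end

section
/- Correctness of the greedy single-step choice in the Bellman recursion: under the monotonicity assumption f̃(X_i, 0) ≤ f̃(X_i, b) for all b ≥ 0, any optimal schedule for SUB-PROBLEM[i,j] must begin with either z_i = 1 achieving value f̃(X_i,0) + c_i + Φ[i+1,i] or z_i = 0 achieving value f̃(X_i, ∑_{k=j}^{i-1}B_k) + Φ[i+1,j], and consequently Φ[i,j] equals the minimum of these two quantities. -/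
private lemma cost_congr (f : ℕ → ℝ → ℝ) (c B : ℕ → ℝ) :
    ∀ (m i : ℕ) (b : ℝ) (z z' : ℕ → Bool),
      (∀ k, i ≤ k → k < i + m → z k = z' k) →
      cost f c B m i b z = cost f c B m i b z' := by
  intro m
  induction m with
  | zero => intro i b z z' h; rfl
  | succ m ih =>
    intro i b z z' h
    have hzi : z i = z' i := h i le_rfl (by omega)
    simp only [cost, hzi]
    rw [ih (i+1) (B i) z z' (fun k hk hk' => h k (by omega) (by omega)),
        ih (i+1) (b + B i) z z' (fun k hk hk' => h k (by omega) (by omega))]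

private lemma cost_lb (f : ℕ → ℝ → ℝ) (c B : ℕ → ℝ)
    (hf : ∀ i' b, 0 ≤ b → f i' 0 ≤ f i' b) (hB : ∀ k, 0 ≤ B k) :
    ∀ (m i : ℕ) (b : ℝ), 0 ≤ b → ∀ z,
      ∑ k ∈ Finset.Ico i (i+m), (f k 0 + min (c k) 0) ≤ cost f c B m i b z := by
  intro m
  induction m with
  | zero => intro i b hb z; simp [cost]
  | succ m ih =>
    intro i b hb z
    rw [Finset.sum_eq_sum_Ico_succ_bot (by omega : i < i + (m+1))]
    have hIco : i + (m + 1) = (i + 1) + m := by omega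
    rw [hIco]
    by_cases hz : z i
    · have h1 := ih (i+1) (B i) (hB i) z
      have h2 : min (c i) 0 ≤ c i := min_le_left _ _
      simp only [cost, hz, if_true]
      linarith
    · have h1 := ih (i+1) (b + B i) (by have := hB i; linarith) z
      have h2 : min (c i) 0 ≤ (0:ℝ) := min_le_right _ _
      have h3 : f i 0 ≤ f i b := hf i b hb
      simp only [Bool.not_eq_true] at hz
      simp only [cost, hz, Bool.false_eq_true, if_false]
      linarith

private lemma cost_bdd (f : ℕ → ℝ → ℝ) (c B : ℕ → ℝ)
    (hf : ∀ i' b, 0 ≤ b → f i' 0 ≤ f i' b) (hB : ∀ k, 0 ≤ B k)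
    (m i : ℕ) (b : ℝ) (hb : 0 ≤ b) :
    BddBelow (Set.range fun z => cost f c B m i b z) := by
  refine ⟨∑ k ∈ Finset.Ico i (i+m), (f k 0 + min (c k) 0), ?_⟩
  rintro x ⟨z, rfl⟩
  exact cost_lb f c B hf hB m i b hb z

/-- Correctness of the greedy single-step choice in the Bellman recursion:
under the monotonicity assumption `f̃(X_i, 0) ≤ f̃(X_i, b)` for all `b ≥ 0`
(and nonnegative fouling increments), any schedule for SUB-PROBLEM[i,j]
beginning with `z_i = 1` costs at least `f̃(X_i,0) + c_i + Φ[i+1,i]`, any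
schedule beginning with `z_i = 0` costs at least
`f̃(X_i, ∑_{k=j}^{i-1} B_k) + Φ[i+1,j]`, and consequently `Φ[i,j]` equals the
minimum of these two quantities. -/
theorem bellman_greedy_correct (f : ℕ → ℝ → ℝ) (c B : ℕ → ℝ) (n i j : ℕ)
    (hf : ∀ i' b, 0 ≤ b → f i' 0 ≤ f i' b) (hB : ∀ k, 0 ≤ B k)
    (hj : j < i) (hi : i < n) :
    (∀ z : ℕ → Bool,
      (z i = true →
        f i 0 + c i + Phi f c B n (i + 1) i ≤
          cost f c B (n + 1 - i) i (∑ k ∈ Finset.Ico j i, B k) z) ∧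
      (z i = false →
        f i (∑ k ∈ Finset.Ico j i, B k) + Phi f c B n (i + 1) j ≤
          cost f c B (n + 1 - i) i (∑ k ∈ Finset.Ico j i, B k) z)) ∧
    Phi f c B n i j =
      min (f i 0 + c i + Phi f c B n (i + 1) i)
        (f i (∑ k ∈ Finset.Ico j i, B k) + Phi f c B n (i + 1) j) := by
  have hb0 : (0:ℝ) ≤ ∑ k ∈ Finset.Ico j i, B k := Finset.sum_nonneg fun k _ => hB k
  set b0 := ∑ k ∈ Finset.Ico j i, B k with hb0def
  have hmi : n + 1 - i = (n - i) + 1 := by omega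
  set m := n - i with hm
  have hm1 : n + 1 - (i+1) = m := by omega
  have hsum1 : ∑ k ∈ Finset.Ico i (i+1), B k = B i := by simp
  have hsumj : ∑ k ∈ Finset.Ico j (i+1), B k = b0 + B i := by
    rw [Finset.sum_Ico_succ_top hj.le]
  have hPhi1 : Phi f c B n (i+1) i = ⨅ z : ℕ → Bool, cost f c B m (i+1) (B i) z := by
    simp only [Phi, hm1, hsum1]
  have hPhij : Phi f c B n (i+1) j = ⨅ z : ℕ → Bool, cost f c B m (i+1) (b0 + B i) z := by
    simp only [Phi, hm1, hsumj]
  have hbdd1 := cost_bdd f c B hf hB m (i+1) (B i) (hB i)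
  have hbddj := cost_bdd f c B hf hB m (i+1) (b0 + B i) (by have := hB i; linarith)
  have hbdd0 := cost_bdd f c B hf hB (m+1) i b0 hb0
  have hcost_true : ∀ z : ℕ → Bool, z i = true →
      cost f c B (n + 1 - i) i b0 z = f i 0 + c i + cost f c B m (i+1) (B i) z := by
    intro z hz
    rw [hmi]; simp only [cost, hz, if_true]
  have hcost_false : ∀ z : ℕ → Bool, z i = false →
      cost f c B (n + 1 - i) i b0 z = f i b0 + cost f c B m (i+1) (b0 + B i) z := by
    intro z hz
    rw [hmi]; simp only [cost, hz, Bool.false_eq_true, if_false]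
  have part1 : ∀ z : ℕ → Bool,
      (z i = true →
        f i 0 + c i + Phi f c B n (i + 1) i ≤ cost f c B (n + 1 - i) i b0 z) ∧
      (z i = false →
        f i b0 + Phi f c B n (i + 1) j ≤ cost f c B (n + 1 - i) i b0 z) := by
    intro z
    constructor
    · intro hz
      rw [hcost_true z hz, hPhi1]
      have := ciInf_le hbdd1 z
      linarith
    · intro hz
      rw [hcost_false z hz, hPhij]
      have := ciInf_le hbddj z
      linarith
  refine ⟨part1, le_antisymm ?_ ?_⟩
  · apply le_min
    · -- Phi i j ≤ f i 0 + c i + Phi (i+1) i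
      rw [hPhi1]
      have key : ∀ z : ℕ → Bool,
          Phi f c B n i j - (f i 0 + c i) ≤ cost f c B m (i+1) (B i) z := by
        intro z
        have h1 : Phi f c B n i j ≤ cost f c B (n+1-i) i b0 (Function.update z i true) := by
          unfold Phi
          exact ciInf_le (by rw [hmi]; exact hbdd0) _
        rw [hcost_true _ (Function.update_self i true z)] at h1
        have h2 : cost f c B m (i+1) (B i) (Function.update z i true) =
            cost f c B m (i+1) (B i) z :=
          cost_congr f c B m (i+1) (B i) _ _
            (fun k hk hk' => Function.update_of_ne (by omega) _ _)
        rw [h2] at h1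
        linarith
      have := le_ciInf key
      linarith
    · rw [hPhij]
      have key : ∀ z : ℕ → Bool,
          Phi f c B n i j - f i b0 ≤ cost f c B m (i+1) (b0 + B i) z := by
        intro z
        have h1 : Phi f c B n i j ≤ cost f c B (n+1-i) i b0 (Function.update z i false) := by
          unfold Phi
          exact ciInf_le (by rw [hmi]; exact hbdd0) _
        rw [hcost_false _ (Function.update_self i false z)] at h1
        have h2 : cost f c B m (i+1) (b0 + B i) (Function.update z i false) =
            cost f c B m (i+1) (b0 + B i) z :=
          cost_congr f c B m (i+1) (b0 + B i) _ _
            (fun k hk hk' => Function.update_of_ne (by omega) _ _)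
        rw [h2] at h1
        linarith
      have := le_ciInf key
      linarith
  · unfold Phi
    apply le_ciInf
    intro z
    rcases Bool.eq_false_or_eq_true (z i) with hz | hz
    · exact le_trans (min_le_left _ _) ((part1 z).1 hz)
    · exact le_trans (min_le_right _ _) ((part1 z).2 hz)
end
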